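/- The commutator of the second-order operator Σ_{i,j≥1} i·j·p_{i+j+1}·∂ᵢ∂ⱼ with E₂ satisfies [Σ_{i,j≥1} i·j·p_{i+j+1}·∂ᵢ∂ⱼ, E₂] = Σ_{i,j≥1} i·j·p_{i+j+2}·∂ᵢ∂ⱼ as R-linear operators on A. -/

import Mathlib

/- R = ℚ[α], A = R[p₁,p₂,…].
   [Σ_{i,j≥1} ij·p_{i+j+1}·∂ᵢ∂ⱼ, E₂] = Σ_{i,j≥1} ij·p_{i+j+2}·∂ᵢ∂ⱼ. -/

open MvPolynomial

noncomputable section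

abbrev R : Type := Polynomial ℚ
abbrev A : Type := MvPolynomial ℕ+ R

/-- the power-sum generator pᵢ (i ≥ 1) -/
def p (i : ℕ+) : A := X i

/-- the partial derivative ∂/∂pᵢ -/
def d (i : ℕ+) (f : A) : A := pderiv i f

/-- E₂ = Σ_{i≥1} i·p_{i+1}·∂ᵢ -/
def E₂ (f : A) : A := ∑ᶠ i : ℕ+, ((i : ℕ) : R) • (p (i + 1) * d i f)

/-- the second-order operator Σ_{i,j≥1} ij·p_{i+j+1}·∂ᵢ∂ⱼ -/
def T (f : A) : A :=
  ∑ᶠ i : ℕ+, ∑ᶠ j : ℕ+, (((i : ℕ) : R) * ((j : ℕ) : R)) • (p (i + j + 1) * d i (d j f))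


/-! On a fixed polynomial `f` every infinite sum involved is a finite sum over a finite set `S`
of indices containing `i`, `i + 1` and `i + j + 1` for all variables `i, j` of `f`. The commutator
`[p_m ∂ᵢ∂ⱼ, p_n ∂_k]` of two monomial operators is a sum of three Kronecker-delta terms
(`[∂ᵢ, p_n] = δᵢₙ`, and the third-order terms cancel); weighted by `ijk` and summed, they collapse
to `p_{i+j+2} ∂ᵢ∂ⱼ` with coefficient `ij(j+1) + ij(i+1) - ij(i+j+1) = ij`. -/

open Finset

theorem MvPolynomial.pderiv_comm {σ S : Type*} [CommRing S] (i j : σ) (f : MvPolynomial σ S) :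
    pderiv i (pderiv j f) = pderiv j (pderiv i f) := by
  classical
  have h : ⁅pderiv (R := S) i, pderiv (R := S) j⁆ = 0 := by
    refine derivation_ext fun k => ?_
    rw [Derivation.commutator_apply]
    simp [pderiv_X, Pi.single_apply, apply_ite]
  rw [← sub_eq_zero, ← Derivation.commutator_apply, h, Derivation.zero_apply]

theorem MvPolynomial.pderiv_mem_supported {σ S : Type*} [CommSemiring S] {s : Set σ} (i : σ)
    {f : MvPolynomial σ S} (hf : f ∈ supported S s) : pderiv i f ∈ supported S s := by
  classical
  induction hf using Algebra.adjoin_induction with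
  | mem x hx =>
    obtain ⟨j, -, rfl⟩ := hx
    rw [pderiv_X, Pi.single_apply]
    split_ifs
    exacts [one_mem _, zero_mem _]
  | algebraMap r => simp
  | add x y _ _ hx hy => rw [map_add]; exact add_mem hx hy
  | mul x y hx' hy' hx hy => rw [pderiv_mul]; exact add_mem (mul_mem hx hy') (mul_mem hx' hy)

theorem finsum_finsum_eq_sum_sum {M ι κ : Type*} [AddCommMonoid M] {F : ι → κ → M}
    (s : Finset ι) (t : Finset κ) (h : ∀ i j, F i j ≠ 0 → i ∈ s ∧ j ∈ t) :
    ∑ᶠ i, ∑ᶠ j, F i j = ∑ i ∈ s, ∑ j ∈ t, F i j := by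
  rw [finsum_eq_sum_of_support_subset (s := s)]
  · exact sum_congr rfl fun i _ => finsum_eq_sum_of_support_subset _ fun j hj => (h i j hj).2
  · intro i hi
    by_contra his
    exact hi (finsum_eq_zero_of_forall_eq_zero fun j => by_contra fun hj => his (h i j hj).1)

lemma d_zero (i : ℕ+) : d i 0 = 0 := map_zero (pderiv i)

lemma d_mem_supported (i : ℕ+) {s : Set ℕ+} {g : A} (hg : g ∈ supported R s) :
    d i g ∈ supported R s :=
  pderiv_mem_supported i hg

lemma d_eq_zero_of_notMem_vars {i : ℕ+} {g : A} (hi : i ∉ g.vars) : d i g = 0 :=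
  pderiv_eq_zero_of_notMem_vars hi

lemma d_comm (i j : ℕ+) (g : A) : d i (d j g) = d j (d i g) := pderiv_comm i j g

lemma d_p_mul (i k : ℕ+) (g : A) : d i (p k * g) = (if k = i then g else 0) + p k * d i g := by
  simp [d, p, pderiv_X, Pi.single_apply, add_comm, eq_comm]

-- `[∂ᵢ, p_n] = δᵢₙ`; the third-order terms cancel because partial derivatives commute.
lemma p_mul_d_d_p_mul_sub (m n i j k : ℕ+) (g : A) :
    p m * d i (d j (p n * d k g)) - p n * d k (p m * d i (d j g))
      = (if n = j then p m * d i (d k g) else 0) + (if n = i then p m * d j (d k g) else 0)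
        - (if m = k then p n * d i (d j g) else 0) := by
  have hd : d k (d i (d j g)) = d i (d j (d k g)) := by rw [d_comm k, d_comm k]
  have hadd : ∀ x y : A, d i (x + y) = d i x + d i y := fun x y => map_add (pderiv i) x y
  rw [d_p_mul j n, hadd, d_p_mul i n, d_p_mul k m, hd, apply_ite (d i), d_zero]
  split_ifs <;> ring

def secondOrder (c : ℕ+) (f : A) : A :=
  ∑ᶠ i : ℕ+, ∑ᶠ j : ℕ+, (((i : ℕ) : R) * ((j : ℕ) : R)) • (p (i + j + c) * d i (d j f))

lemma T_eq_secondOrder (g : A) : T g = secondOrder 1 g := rfl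

section Truncation

variable {S : Finset ℕ+} {g : A}

lemma d_eq_zero_of_notMem (hg : g ∈ supported R (S : Set ℕ+)) {i : ℕ+} (hi : i ∉ S) : d i g = 0 :=
  d_eq_zero_of_notMem_vars fun h => hi (mem_supported.1 hg h)

lemma E₂_eq_sum (hg : g ∈ supported R (S : Set ℕ+)) :
    E₂ g = ∑ k ∈ S, ((k : ℕ) : R) • (p (k + 1) * d k g) :=
  finsum_eq_sum_of_support_subset _ fun k hk =>
    by_contra fun hkS => hk (by simp [d_eq_zero_of_notMem hg hkS])

lemma secondOrder_eq_sum (c : ℕ+) (hg : g ∈ supported R (S : Set ℕ+)) :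
    secondOrder c g = ∑ i ∈ S, ∑ j ∈ S,
      (((i : ℕ) : R) * ((j : ℕ) : R)) • (p (i + j + c) * d i (d j g)) := by
  refine finsum_finsum_eq_sum_sum _ _ fun i j h => ?_
  by_contra hij
  apply h
  rcases not_and_or.1 hij with hi | hj
  · rw [d_eq_zero_of_notMem (d_mem_supported j hg) hi, mul_zero, smul_zero]
  · rw [d_eq_zero_of_notMem hg hj, d_zero, mul_zero, smul_zero]

end Truncation

theorem Finset.sum_ite_eq_of_notMem_eq_zero {ι M : Type*} [AddCommMonoid M] [DecidableEq ι]
    (s : Finset ι) (a : ι) (F : ι → M) (h : a ∉ s → F a = 0) :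
    ∑ x ∈ s, (if a = x then F x else 0) = F a := by
  rw [sum_ite_eq, ite_eq_left_iff]
  exact fun ha => (h ha).symm

section Commutator

variable {S : Finset ℕ+} {f : A}

lemma d_eq_zero_of_add_one_notMem (hS : ∀ k ∈ f.vars, k + 1 ∈ S) {k : ℕ+} (hk : k + 1 ∉ S) :
    d k f = 0 :=
  d_eq_zero_of_notMem_vars fun h => hk (hS k h)

lemma d_d_eq_zero_of_add_add_one_notMem (hS : ∀ i ∈ f.vars, ∀ j ∈ f.vars, i + j + 1 ∈ S)
    {i j : ℕ+} (hij : i + j + 1 ∉ S) : d i (d j f) = 0 := by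
  by_cases hi : i ∈ f.vars
  · by_cases hj : j ∈ f.vars
    · exact absurd (hS i hi j hj) hij
    · rw [d_eq_zero_of_notMem_vars hj, d_zero]
  · rw [d_comm, d_eq_zero_of_notMem_vars hi, d_zero]

lemma E₂_mem_supported (hf : f ∈ supported R (S : Set ℕ+)) (hS : ∀ k ∈ f.vars, k + 1 ∈ S) :
    E₂ f ∈ supported R (S : Set ℕ+) := by
  rw [E₂_eq_sum (mem_supported_vars f)]
  exact sum_mem fun k hk =>
    Subalgebra.smul_mem _ (mul_mem (X_mem_supported.2 (hS k hk)) (d_mem_supported k hf)) _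

lemma T_mem_supported (hf : f ∈ supported R (S : Set ℕ+))
    (hS : ∀ i ∈ f.vars, ∀ j ∈ f.vars, i + j + 1 ∈ S) : T f ∈ supported R (S : Set ℕ+) := by
  rw [T_eq_secondOrder, secondOrder_eq_sum 1 (mem_supported_vars f)]
  exact sum_mem fun i hi => sum_mem fun j hj => Subalgebra.smul_mem _
    (mul_mem (X_mem_supported.2 (hS i hi j hj)) (d_mem_supported i (d_mem_supported j hf))) _

lemma T_E₂_sub_E₂_T_eq_sum (hf : f ∈ supported R (S : Set ℕ+))
    (hE : E₂ f ∈ supported R (S : Set ℕ+)) (hT : T f ∈ supported R (S : Set ℕ+)) :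
    T (E₂ f) - E₂ (T f) = ∑ i ∈ S, ∑ j ∈ S, ∑ k ∈ S,
      (((i : ℕ) : R) * ((j : ℕ) : R) * ((k : ℕ) : R)) •
        (p (i + j + 1) * d i (d j (p (k + 1) * d k f))
          - p (k + 1) * d k (p (i + j + 1) * d i (d j f))) := by
  have hTE : T (E₂ f) = ∑ i ∈ S, ∑ j ∈ S, ∑ k ∈ S,
      (((i : ℕ) : R) * ((j : ℕ) : R) * ((k : ℕ) : R)) •
        (p (i + j + 1) * d i (d j (p (k + 1) * d k f))) := by
    rw [T_eq_secondOrder, secondOrder_eq_sum 1 hE, E₂_eq_sum hf]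
    simp only [d, map_sum, Derivation.map_smul, mul_sum, mul_smul_comm, smul_sum, smul_smul]
  have hET : E₂ (T f) = ∑ i ∈ S, ∑ j ∈ S, ∑ k ∈ S,
      (((i : ℕ) : R) * ((j : ℕ) : R) * ((k : ℕ) : R)) •
        (p (k + 1) * d k (p (i + j + 1) * d i (d j f))) := by
    rw [E₂_eq_sum hT, T_eq_secondOrder, secondOrder_eq_sum 1 hf]
    simp only [d, map_sum, Derivation.map_smul, mul_sum, mul_smul_comm, smul_sum, smul_smul]
    rw [sum_comm]
    refine sum_congr rfl fun i _ => ?_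
    rw [sum_comm]
    refine sum_congr rfl fun j _ => sum_congr rfl fun k _ => ?_
    rw [mul_comm]
  rw [hTE, hET]
  simp only [← sum_sub_distrib, ← smul_sub]

lemma sum_ite_add_one_eq_snd (hS : ∀ k ∈ f.vars, k + 1 ∈ S) :
    ∑ i ∈ S, ∑ j ∈ S, ∑ k ∈ S, (if k + 1 = j then
        (((i : ℕ) : R) * ((j : ℕ) : R) * ((k : ℕ) : R)) • (p (i + j + 1) * d i (d k f)) else 0)
      = ∑ i ∈ S, ∑ j ∈ S, (((i : ℕ) : R) * ((j : ℕ) : R) * ((j : ℕ) + 1)) •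
          (p (i + j + 2) * d i (d j f)) := by
  refine sum_congr rfl fun i _ => ?_
  rw [sum_comm]
  refine sum_congr rfl fun k _ => ?_
  rw [sum_ite_eq_of_notMem_eq_zero]
  · congr 1
    push_cast
    ring
  · intro hk
    rw [d_eq_zero_of_add_one_notMem hS hk, d_zero, mul_zero, smul_zero]

lemma sum_ite_add_one_eq_fst (hS : ∀ k ∈ f.vars, k + 1 ∈ S) :
    ∑ i ∈ S, ∑ j ∈ S, ∑ k ∈ S, (if k + 1 = i then
        (((i : ℕ) : R) * ((j : ℕ) : R) * ((k : ℕ) : R)) • (p (i + j + 1) * d j (d k f)) else 0)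
      = ∑ i ∈ S, ∑ j ∈ S, (((i : ℕ) : R) * ((j : ℕ) : R) * ((i : ℕ) + 1)) •
          (p (i + j + 2) * d i (d j f)) := by
  rw [sum_comm]
  conv_rhs => rw [sum_comm]
  refine sum_congr rfl fun j _ => ?_
  rw [sum_comm]
  refine sum_congr rfl fun k _ => ?_
  rw [sum_ite_eq_of_notMem_eq_zero, d_comm]
  · congr 1
    · push_cast
      ring
    · congr 2
      apply PNat.eq
      push_cast
      ring
  · intro hk
    rw [d_eq_zero_of_add_one_notMem hS hk, d_zero, mul_zero, smul_zero]

lemma sum_ite_add_add_one_eq (hS : ∀ i ∈ f.vars, ∀ j ∈ f.vars, i + j + 1 ∈ S) :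
    ∑ i ∈ S, ∑ j ∈ S, ∑ k ∈ S, (if i + j + 1 = k then
        (((i : ℕ) : R) * ((j : ℕ) : R) * ((k : ℕ) : R)) • (p (k + 1) * d i (d j f)) else 0)
      = ∑ i ∈ S, ∑ j ∈ S, (((i : ℕ) : R) * ((j : ℕ) : R) * ((i : ℕ) + (j : ℕ) + 1)) •
          (p (i + j + 2) * d i (d j f)) := by
  refine sum_congr rfl fun i _ => sum_congr rfl fun j _ => ?_
  rw [sum_ite_eq_of_notMem_eq_zero]
  · congr 1
    push_cast
    ring
  · intro hij
    rw [d_d_eq_zero_of_add_add_one_notMem hS hij, mul_zero, smul_zero]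

lemma sum_commutator_deltas (hS₁ : ∀ k ∈ f.vars, k + 1 ∈ S)
    (hS₂ : ∀ i ∈ f.vars, ∀ j ∈ f.vars, i + j + 1 ∈ S) :
    ∑ i ∈ S, ∑ j ∈ S, ∑ k ∈ S, (((i : ℕ) : R) * ((j : ℕ) : R) * ((k : ℕ) : R)) •
      ((if k + 1 = j then p (i + j + 1) * d i (d k f) else 0)
        + (if k + 1 = i then p (i + j + 1) * d j (d k f) else 0)
        - (if i + j + 1 = k then p (k + 1) * d i (d j f) else 0))
      = ∑ i ∈ S, ∑ j ∈ S, (((i : ℕ) : R) * ((j : ℕ) : R)) • (p (i + j + 2) * d i (d j f)) := by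
  simp only [smul_add, smul_sub, smul_ite, smul_zero, sum_add_distrib, sum_sub_distrib]
  rw [sum_ite_add_one_eq_snd hS₁, sum_ite_add_one_eq_fst hS₁, sum_ite_add_add_one_eq hS₂,
    ← sum_add_distrib, ← sum_sub_distrib]
  refine sum_congr rfl fun i _ => ?_
  rw [← sum_add_distrib, ← sum_sub_distrib]
  refine sum_congr rfl fun j _ => ?_
  rw [← add_smul, ← sub_smul]
  congr 1
  ring

end Commutator

theorem commutator_T_E2 (f : A) :
    T (E₂ f) - E₂ (T f)
      = ∑ᶠ i : ℕ+, ∑ᶠ j : ℕ+,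
          (((i : ℕ) : R) * ((j : ℕ) : R)) • (p (i + j + 2) * d i (d j f)) := by
  set S := f.vars ∪ (f.vars.image (· + 1) ∪ image₂ (fun i j => i + j + 1) f.vars f.vars)
  have hf : f ∈ supported R (S : Set ℕ+) :=
    mem_supported.2 fun i hi => mem_union_left _ hi
  have hS₁ : ∀ k ∈ f.vars, k + 1 ∈ S :=
    fun k hk => mem_union_right _ (mem_union_left _ (mem_image_of_mem _ hk))
  have hS₂ : ∀ i ∈ f.vars, ∀ j ∈ f.vars, i + j + 1 ∈ S :=
    fun i hi j hj => mem_union_right _ (mem_union_right _ (mem_image₂_of_mem hi hj))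
  rw [T_E₂_sub_E₂_T_eq_sum hf (E₂_mem_supported hf hS₁) (T_mem_supported hf hS₂)]
  simp only [p_mul_d_d_p_mul_sub]
  rw [sum_commutator_deltas hS₁ hS₂]
  exact (secondOrder_eq_sum 2 hf).symm
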